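/- Let H be a hypergraph with an Euler family F and incidence graph G, let G_F be the subgraph of G corresponding to F, and let C be an F-interchanging cycle in G. If the v-vertices of C lie in pairwise distinct connected components G1, …, Gk of G_F, at least two of which are nontrivial, and none of these v-vertices is a cut vertex of G_F, then C is an F-diminishing cycle. -/

import Mathlib

open scoped Classical

/-- A hypergraph: a finite nonempty vertex type `V`, a finite index type `E` of
edges (so that repeated edges are allowed, as in a multiset of edges), and a map
`mem` assigning to each edge the finite set of its vertices. -/
structure EHypergraph where
  V : Type
  E : Type
  [fintypeV : Fintype V]
  [fintypeE : Fintype E]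
  [nonemptyV : Nonempty V]
  mem : E → Finset V

attribute [instance] EHypergraph.fintypeV EHypergraph.fintypeE EHypergraph.nonemptyV

namespace EHypergraph

/-- A walk `v₀ e₁ v₁ e₂ … e_k v_k` in a hypergraph: consecutive anchors are
distinct and both lie in the connecting edge. -/
structure Walk (H : EHypergraph) where
  k : ℕ
  vtx : Fin (k + 1) → H.V
  edge : Fin k → H.E
  mem_left : ∀ i : Fin k, vtx i.castSucc ∈ H.mem (edge i)
  mem_right : ∀ i : Fin k, vtx i.succ ∈ H.mem (edge i)
  ne : ∀ i : Fin k, vtx i.castSucc ≠ vtx i.succ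

/-- A trail is a walk with pairwise distinct edges. -/
def Walk.IsTrail {H : EHypergraph} (W : H.Walk) : Prop :=
  Function.Injective W.edge

/-- A closed walk: `v₀ = v_k` and `k ≥ 2`. -/
def Walk.IsClosed {H : EHypergraph} (W : H.Walk) : Prop :=
  W.vtx 0 = W.vtx (Fin.last W.k) ∧ 2 ≤ W.k

def Walk.IsClosedTrail {H : EHypergraph} (W : H.Walk) : Prop :=
  W.IsTrail ∧ W.IsClosed

/-- The anchors of a walk. -/
def Walk.anchors {H : EHypergraph} (W : H.Walk) : Set H.V := Set.range W.vtx

/-- The set of edges traversed by a walk. -/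
def Walk.edgeSet {H : EHypergraph} (W : H.Walk) : Set H.E := Set.range W.edge

/-- An Euler tour: a closed trail traversing every edge exactly once. -/
def IsEulerTour (H : EHypergraph) (W : H.Walk) : Prop :=
  W.IsClosedTrail ∧ Function.Bijective W.edge

def HasEulerTour (H : EHypergraph) : Prop := ∃ W : H.Walk, H.IsEulerTour W

/-- A hypergraph is eulerian if it has no edges or admits an Euler tour. -/
def IsEulerian (H : EHypergraph) : Prop := IsEmpty H.E ∨ H.HasEulerTour

/-- An Euler family: a set of pairwise anchor-disjoint, edge-disjoint closed
trails jointly traversing every edge exactly once. -/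
def IsEulerFamily (H : EHypergraph) (F : Set H.Walk) : Prop :=
  (∀ W ∈ F, W.IsClosedTrail) ∧
  (∀ W ∈ F, ∀ W' ∈ F, W ≠ W' →
    Disjoint W.anchors W'.anchors ∧ Disjoint W.edgeSet W'.edgeSet) ∧
  (∀ e : H.E, ∃ W ∈ F, e ∈ W.edgeSet)

/-- A hypergraph is quasi-eulerian if it has no edges or admits an Euler family. -/
def IsQuasiEulerian (H : EHypergraph) : Prop :=
  IsEmpty H.E ∨ ∃ F : Set H.Walk, H.IsEulerFamily F

/-- A minimum Euler family: one with the fewest components. -/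
def IsMinEulerFamily (H : EHypergraph) (F : Set H.Walk) : Prop :=
  H.IsEulerFamily F ∧ ∀ F' : Set H.Walk, H.IsEulerFamily F' → F.ncard ≤ F'.ncard

/-- `H` is `k`-uniform if each edge has exactly `k` vertices. -/
def IsUniform (H : EHypergraph) (k : ℕ) : Prop := ∀ e : H.E, (H.mem e).card = k

/-- A covering `k`-hypergraph (`k ≥ 3`): a nonempty `k`-uniform hypergraph in
which every `(k-1)`-subset of the vertex set lies in at least one edge. -/
def IsCovering (H : EHypergraph) (k : ℕ) : Prop :=
  3 ≤ k ∧ Nonempty H.E ∧ H.IsUniform k ∧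
    ∀ S : Finset H.V, S.card = k - 1 → ∃ e : H.E, S ⊆ H.mem e

/-- The incidence graph of a hypergraph: the bipartite simple graph on
`V ⊕ E` joining `v` and `e` exactly when `v ∈ e`. -/
def incidenceGraph (H : EHypergraph) : SimpleGraph (H.V ⊕ H.E) where
  Adj x y :=
    (∃ v e, x = Sum.inl v ∧ y = Sum.inr e ∧ v ∈ H.mem e) ∨
    (∃ v e, x = Sum.inr e ∧ y = Sum.inl v ∧ v ∈ H.mem e)
  symm := by
    constructor
    rintro x y (⟨v, e, rfl, rfl, h⟩ | ⟨v, e, rfl, rfl, h⟩)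
    · exact Or.inr ⟨v, e, rfl, rfl, h⟩
    · exact Or.inl ⟨v, e, rfl, rfl, h⟩
  loopless := by
    constructor
    rintro x (⟨v, e, rfl, h, -⟩ | ⟨v, e, rfl, h, -⟩) <;> exact absurd h (by simp)

/-- `v` and `e` appear consecutively in some trail of the family `F`. -/
def ConsecIn (H : EHypergraph) (F : Set H.Walk) (v : H.V) (e : H.E) : Prop :=
  ∃ W ∈ F, ∃ i : Fin W.k, W.edge i = e ∧ (W.vtx i.castSucc = v ∨ W.vtx i.succ = v)

/-- The spanning subgraph of the incidence graph corresponding to an Euler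
family `F`: its edges are the incident pairs `ve` consecutive in some trail of `F`. -/
def eulerSubgraph (H : EHypergraph) (F : Set H.Walk) : SimpleGraph (H.V ⊕ H.E) where
  Adj x y :=
    (∃ v e, x = Sum.inl v ∧ y = Sum.inr e ∧ H.ConsecIn F v e) ∨
    (∃ v e, x = Sum.inr e ∧ y = Sum.inl v ∧ H.ConsecIn F v e)
  symm := by
    constructor
    rintro x y (⟨v, e, rfl, rfl, h⟩ | ⟨v, e, rfl, rfl, h⟩)
    · exact Or.inr ⟨v, e, rfl, rfl, h⟩
    · exact Or.inl ⟨v, e, rfl, rfl, h⟩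
  loopless := by
    constructor
    rintro x (⟨v, e, rfl, h, -⟩ | ⟨v, e, rfl, h, -⟩) <;> exact absurd h (by simp)

end EHypergraph

/-- The degree of a vertex of a simple graph (number of neighbours). -/
noncomputable def sdeg {α : Type*} (G : SimpleGraph α) (x : α) : ℕ :=
  (G.neighborSet x).ncard

/-- A connected component of a simple graph is nontrivial if it contains an edge. -/
def NontrivComp {α : Type*} (G : SimpleGraph α) (c : G.ConnectedComponent) : Prop :=
  ∃ x y, G.Adj x y ∧ G.connectedComponentMk x = c

/-- The number of nontrivial connected components of a simple graph. -/
noncomputable def ntComps {α : Type*} (G : SimpleGraph α) : ℕ :=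
  {c : G.ConnectedComponent | NontrivComp G c}.ncard

/-- A cut vertex of a simple graph: a vertex whose deletion increases the number
of connected components, i.e. some two vertices distinct from it are joined by a
walk but by no walk avoiding it. -/
def IsCutVtx {α : Type*} (G : SimpleGraph α) (v : α) : Prop :=
  ∃ x y, x ≠ v ∧ y ≠ v ∧ G.Reachable x y ∧ ¬ ∃ p : G.Walk x y, v ∉ p.support

/-- An `F`-interchanging cycle: a cycle of the incidence graph such that every
e-vertex on it is incident in `G_F` with exactly one edge of the cycle. -/
def IsInterchanging (H : EHypergraph) (F : Set H.Walk) {x : H.V ⊕ H.E}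
    (C : (H.incidenceGraph).Walk x x) : Prop :=
  C.IsCycle ∧ ∀ e : H.E, (Sum.inr e : H.V ⊕ H.E) ∈ C.support →
    ∃! s : Sym2 (H.V ⊕ H.E),
      s ∈ C.edges ∧ (Sum.inr e : H.V ⊕ H.E) ∈ s ∧ s ∈ (H.eulerSubgraph F).edgeSet

/-- The symmetric difference of a simple graph with a set of potential edges. -/
def symmDiffEdges {α : Type*} (G : SimpleGraph α) (s : Set (Sym2 α)) : SimpleGraph α :=
  SimpleGraph.fromEdgeSet (symmDiff G.edgeSet s)

/-- An `F`-diminishing cycle: an `F`-interchanging cycle `C` such that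
`G_F Δ C` has fewer nontrivial connected components than `G_F`. -/
def IsDiminishing (H : EHypergraph) (F : Set H.Walk) {x : H.V ⊕ H.E}
    (C : (H.incidenceGraph).Walk x x) : Prop :=
  IsInterchanging H F C ∧
    ntComps (symmDiffEdges (H.eulerSubgraph F) {s | s ∈ C.edges}) <
      ntComps (H.eulerSubgraph F)

/-!
Let `R` be the union of the components of `G_F` containing the v-vertices of `C`. Every edge of
`C` has both ends in `R`, so outside `R` the graphs `G_F` and `G_F Δ C` coincide. Inside `R` all
edges of `G_F Δ C` fall into one component: two vertices of the component of a v-vertex `w` of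
`C`, both different from `w`, are joined by a `G_F`-walk avoiding `w` (as `w` is not a cut
vertex), and such a walk uses no edge of `C` (it meets no other v-vertex of `C`); since `w` has
even degree in `G_F`, the edges of `C` at `w` hang on to this piece, and consecutive e-vertices
of `C` are thereby joined. So the at least two nontrivial components meeting `R` merge into one.
-/

open SimpleGraph Sum

namespace SimpleGraph

variable {α : Type*} {G : SimpleGraph α}

theorem Walk.iff_of_mem_support {P : α → Prop} {u w z : α} (p : G.Walk u w)
    (hP : ∀ a b, s(a, b) ∈ p.edges → (P a ↔ P b)) (hz : z ∈ p.support) : P u ↔ P z := by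
  induction p with
  | nil => rw [Walk.mem_support_nil_iff.mp hz]
  | cons h q ih =>
    rcases List.mem_cons.mp (Walk.support_cons h q ▸ hz) with rfl | hz
    · rfl
    · exact (hP _ _ (by simp)).trans (ih (fun a b hab => hP a b (by simp [hab])) hz)

theorem Walk.IsCycle.eq_or_eq_or_eq_of_mem_edges {u v a b c : α} {p : G.Walk u u}
    (hp : p.IsCycle) (ha : s(v, a) ∈ p.edges) (hb : s(v, b) ∈ p.edges)
    (hc : s(v, c) ∈ p.edges) : a = b ∨ a = c ∨ b = c := by
  have hv : v ∈ p.support := p.fst_mem_support_of_mem_edges ha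
  obtain ⟨x, y, -, hxy⟩ := Set.ncard_eq_two.mp (hp.ncard_neighborSet_toSubgraph_eq_two hv)
  have mem : ∀ {d}, s(v, d) ∈ p.edges → d = x ∨ d = y := fun {d} hd => by
    have : d ∈ p.toSubgraph.neighborSet v := Walk.adj_toSubgraph_iff_mem_edges.mpr hd
    simpa [hxy] using this
  rcases mem ha with rfl | rfl <;> rcases mem hb with rfl | rfl <;> rcases mem hc with rfl | rfl <;>
    simp

theorem Walk.IsCycle.exists_mem_edges {u v : α} {p : G.Walk u u} (hp : p.IsCycle)
    (hv : v ∈ p.support) : ∃ a, s(v, a) ∈ p.edges := by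
  obtain ⟨x, y, -, hxy⟩ := Set.ncard_eq_two.mp (hp.ncard_neighborSet_toSubgraph_eq_two hv)
  have hx : x ∈ p.toSubgraph.neighborSet v := hxy ▸ Set.mem_insert x _
  exact ⟨x, Walk.adj_toSubgraph_iff_mem_edges.mp hx⟩

end SimpleGraph

section SymmDiff

variable {α : Type*} {G : SimpleGraph α} {s : Set (Sym2 α)} {a b : α}

theorem symmDiffEdges_adj :
    (symmDiffEdges G s).Adj a b ↔
      (G.Adj a b ∧ s(a, b) ∉ s ∨ s(a, b) ∈ s ∧ ¬ G.Adj a b) ∧ a ≠ b := by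
  simp [symmDiffEdges, Set.mem_symmDiff]

theorem symmDiffEdges_adj_of_adj (h : G.Adj a b) (hs : s(a, b) ∉ s) :
    (symmDiffEdges G s).Adj a b :=
  symmDiffEdges_adj.mpr ⟨.inl ⟨h, hs⟩, h.ne⟩

theorem symmDiffEdges_adj_of_mem (hs : s(a, b) ∈ s) (h : ¬ G.Adj a b) (hab : a ≠ b) :
    (symmDiffEdges G s).Adj a b :=
  symmDiffEdges_adj.mpr ⟨.inr ⟨hs, h⟩, hab⟩

theorem adj_of_symmDiffEdges_adj (h : (symmDiffEdges G s).Adj a b) (hs : s(a, b) ∉ s) :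
    G.Adj a b := by
  rcases symmDiffEdges_adj.mp h with ⟨⟨h, -⟩ | ⟨h, -⟩, -⟩
  exacts [h, absurd h hs]

end SymmDiff

section Merging

variable {α : Type*} {G₀ G₁ : SimpleGraph α} {R : Set α}

theorem reachable_of_walk_of_notMem (hR : ∀ z z', G₀.Adj z z' → z ∈ R → z' ∈ R)
    (hout : ∀ z z', z ∉ R → (G₁.Adj z z' ↔ G₀.Adj z z')) {u v : α} (p : G₀.Walk u v)
    (hu : u ∉ R) : G₁.Reachable u v ∧ v ∉ R := by
  induction p with
  | nil => exact ⟨.refl _, hu⟩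
  | cons h q ih =>
    obtain ⟨hr, hv⟩ := ih fun hm => hu (hR _ _ h.symm hm)
    exact ⟨((hout _ _ hu).mpr h).reachable.trans hr, hv⟩

theorem ntComps_lt_of_merge [Finite α] (hR : ∀ z z', G₀.Adj z z' → z ∈ R → z' ∈ R)
    (hout : ∀ z z', z ∉ R → (G₁.Adj z z' ↔ G₀.Adj z z')) {b v w : α}
    (hmerge : ∀ z z', G₁.Adj z z' → z ∈ R → G₁.Reachable z b)
    (hv : v ∈ R) (hw : w ∈ R) (hvw : ¬ G₀.Reachable v w)
    (hvN : NontrivComp G₀ (G₀.connectedComponentMk v))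
    (hwN : NontrivComp G₀ (G₀.connectedComponentMk w)) :
    ntComps G₁ < ntComps G₀ := by
  let Φ : G₀.ConnectedComponent → G₁.ConnectedComponent :=
    ConnectedComponent.lift
      (fun z => if z ∈ R then G₁.connectedComponentMk b else G₁.connectedComponentMk z)
      fun z z' p _ => by
        by_cases hz : z ∈ R
        · have hz' : z' ∈ R := of_not_not fun hz' =>
            (reachable_of_walk_of_notMem hR hout p.reverse hz').2 hz
          simp only [hz, hz', if_true]
        · obtain ⟨hr, hz'⟩ := reachable_of_walk_of_notMem hR hout p hz
          simpa only [hz, hz', if_false] using ConnectedComponent.sound hr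
  have hΦR : ∀ z ∈ R, Φ (G₀.connectedComponentMk z) = G₁.connectedComponentMk b :=
    fun z hz => if_pos hz
  have hsub : {c | NontrivComp G₁ c} ⊆ Φ '' {c | NontrivComp G₀ c} := by
    rintro _ ⟨z, z', hzz', rfl⟩
    by_cases hz : z ∈ R
    · exact ⟨_, hvN, (hΦR v hv).trans (ConnectedComponent.sound (hmerge z z' hzz' hz)).symm⟩
    · exact ⟨_, ⟨z, z', (hout z z' hz).mp hzz', rfl⟩, if_neg hz⟩
  have hnotInj : ¬ Set.InjOn Φ {c | NontrivComp G₀ c} := fun hinj =>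
    hvw (ConnectedComponent.exact (hinj hvN hwN ((hΦR v hv).trans (hΦR w hw).symm)))
  calc ntComps G₁ ≤ (Φ '' {c | NontrivComp G₀ c}).ncard := Set.ncard_le_ncard hsub
    _ < ntComps G₀ :=
      lt_of_le_of_ne Set.ncard_image_le fun h => hnotInj (Set.injOn_of_ncard_image_eq h)

end Merging

namespace EHypergraph

variable {H : EHypergraph}

@[simp]
theorem not_incidenceGraph_adj_inl_inl {v w : H.V} : ¬ H.incidenceGraph.Adj (inl v) (inl w) := by
  simp [incidenceGraph]

@[simp]
theorem not_incidenceGraph_adj_inr_inr {e f : H.E} : ¬ H.incidenceGraph.Adj (inr e) (inr f) := by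
  simp [incidenceGraph]

variable {F : Set H.Walk}

@[simp]
theorem eulerSubgraph_adj_inl_inr {v : H.V} {e : H.E} :
    (H.eulerSubgraph F).Adj (inl v) (inr e) ↔ H.ConsecIn F v e := by
  simp [eulerSubgraph]

@[simp]
theorem not_eulerSubgraph_adj_inl_inl {v w : H.V} : ¬ (H.eulerSubgraph F).Adj (inl v) (inl w) := by
  simp [eulerSubgraph]

@[simp]
theorem not_eulerSubgraph_adj_inr_inr {e f : H.E} : ¬ (H.eulerSubgraph F).Adj (inr e) (inr f) := by
  simp [eulerSubgraph]

theorem Walk.IsClosed.exists_ne_vtx_succ_eq {W : H.Walk} (hW : W.IsClosed) (i : Fin W.k) :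
    ∃ j ≠ i, W.vtx j.succ = W.vtx i.castSucc := by
  obtain ⟨h0, hk⟩ := hW
  by_cases hi : (i : ℕ) = 0
  · refine ⟨⟨W.k - 1, by omega⟩, fun h => by simp [Fin.ext_iff] at h; omega, ?_⟩
    rw [show i.castSucc = 0 by ext; simp [hi], h0]
    congr 1; ext; simp; omega
  · refine ⟨⟨i - 1, by omega⟩, fun h => by simp [Fin.ext_iff] at h; omega, ?_⟩
    congr 1; ext; simp; omega

theorem Walk.IsClosed.exists_ne_vtx_castSucc_eq {W : H.Walk} (hW : W.IsClosed) (i : Fin W.k) :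
    ∃ j ≠ i, W.vtx j.castSucc = W.vtx i.succ := by
  obtain ⟨h0, hk⟩ := hW
  by_cases hi : (i : ℕ) = W.k - 1
  · refine ⟨⟨0, by omega⟩, fun h => by simp [Fin.ext_iff] at h; omega, ?_⟩
    rw [show i.succ = Fin.last W.k by ext; simp; omega, ← h0]
    rfl
  · refine ⟨⟨i + 1, by omega⟩, fun h => by simp [Fin.ext_iff] at h, ?_⟩
    congr 1

theorem IsEulerFamily.exists_ne_adj (hF : H.IsEulerFamily F) {v : H.V} {e : H.E}
    (h : (H.eulerSubgraph F).Adj (inl v) (inr e)) :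
    ∃ f ≠ e, (H.eulerSubgraph F).Adj (inl v) (inr f) := by
  obtain ⟨W, hW, i, rfl, hv⟩ := eulerSubgraph_adj_inl_inr.mp h
  have hne : ∀ j ≠ i, W.edge j ≠ W.edge i := fun j hj h => hj ((hF.1 W hW).1 h)
  rcases hv with rfl | rfl
  · obtain ⟨j, hj, hji⟩ := (hF.1 W hW).2.exists_ne_vtx_succ_eq i
    exact ⟨W.edge j, hne j hj, eulerSubgraph_adj_inl_inr.mpr ⟨W, hW, j, rfl, .inr hji⟩⟩
  · obtain ⟨j, hj, hji⟩ := (hF.1 W hW).2.exists_ne_vtx_castSucc_eq i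
    exact ⟨W.edge j, hne j hj, eulerSubgraph_adj_inl_inr.mpr ⟨W, hW, j, rfl, .inl hji⟩⟩

variable {x : H.V ⊕ H.E}

section

variable (F) (C : H.incidenceGraph.Walk x x)

/-- The vertex set of the paper's `G₁ ∪ ⋯ ∪ G_k`. -/
def cycleRegion : Set (H.V ⊕ H.E) :=
  {z | ∃ v, inl v ∈ C.support ∧ (H.eulerSubgraph F).Reachable z (inl v)}

def VVerticesInDistinctComponents : Prop :=
  ∀ v w : H.V, inl v ∈ C.support → inl w ∈ C.support →
    (H.eulerSubgraph F).Reachable (inl v) (inl w) → v = w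

def NoVVertexIsCut : Prop :=
  ∀ v : H.V, inl v ∈ C.support → ¬ IsCutVtx (H.eulerSubgraph F) (inl v)

abbrev switchedSubgraph : SimpleGraph (H.V ⊕ H.E) :=
  symmDiffEdges (H.eulerSubgraph F) {s | s ∈ C.edges}

end

variable {C : H.incidenceGraph.Walk x x}

theorem exists_inr_mem_edges (hC : C.IsCycle) {v : H.V} (hv : inl v ∈ C.support) :
    ∃ e, s(inl v, inr e) ∈ C.edges := by
  obtain ⟨a, ha⟩ := hC.exists_mem_edges hv
  have hadj := C.adj_of_mem_edges ha
  rcases a with w | e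
  · simp at hadj
  · exact ⟨e, ha⟩

theorem mem_cycleRegion_of_mem_support (hC : IsInterchanging H F C) {z : H.V ⊕ H.E}
    (hz : z ∈ C.support) : z ∈ cycleRegion F C := by
  rcases z with v | e
  · exact ⟨v, hz, .refl _⟩
  -- the unique edge of `C` at `e` that lies in `G_F` joins `e` to a v-vertex of `C`
  obtain ⟨s, ⟨hsC, hes, hsF⟩, -⟩ := hC.2 e hz
  induction s using Sym2.ind with | h a b => ?_
  rcases Sym2.mem_iff.mp hes with rfl | rfl
  · rcases b with v | f
    · exact ⟨v, C.snd_mem_support_of_mem_edges hsC, SimpleGraph.Adj.reachable hsF⟩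
    · simp at hsF
  · rcases a with v | f
    · exact ⟨v, C.fst_mem_support_of_mem_edges hsC, SimpleGraph.Adj.reachable hsF.symm⟩
    · simp at hsF

theorem switchedSubgraph_adj_iff_of_notMem_cycleRegion (hC : IsInterchanging H F C)
    {z z' : H.V ⊕ H.E} (hz : z ∉ cycleRegion F C) :
    (switchedSubgraph F C).Adj z z' ↔ (H.eulerSubgraph F).Adj z z' := by
  have hzC : s(z, z') ∉ C.edges := fun h =>
    hz (mem_cycleRegion_of_mem_support hC (C.fst_mem_support_of_mem_edges h))
  exact ⟨fun h => adj_of_symmDiffEdges_adj h hzC, fun h => symmDiffEdges_adj_of_adj h hzC⟩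

/-- Since `w` is not a cut vertex, two vertices of its component are joined by a walk of `G_F`
avoiding `w`; that walk meets no other v-vertex of `C`, so it uses no edge of `C`. -/
theorem reachable_of_reachable_inl (hdist : VVerticesInDistinctComponents F C)
    (hcut : NoVVertexIsCut F C) {w : H.V} (hw : inl w ∈ C.support) {y y' : H.V ⊕ H.E}
    (hy : y ≠ inl w) (hy' : y' ≠ inl w) (hyw : (H.eulerSubgraph F).Reachable y (inl w))
    (hy'w : (H.eulerSubgraph F).Reachable y' (inl w)) : (switchedSubgraph F C).Reachable y y' := by
  obtain ⟨p, hp⟩ : ∃ p : (H.eulerSubgraph F).Walk y y', inl w ∉ p.support := by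
    by_contra h
    exact hcut w hw ⟨y, y', hy, hy', hyw.trans hy'w.symm, by simpa using h⟩
  refine ⟨p.transfer _ fun s hs => ?_⟩
  induction s using Sym2.ind with | h a b => ?_
  refine symmDiffEdges_adj_of_adj (p.adj_of_mem_edges hs) fun hC => ?_
  have avoid : ∀ v, inl v ∈ p.support → inl v ∈ C.support → False := fun v hvp hvC =>
    hp (hdist v w hvC hw ((p.takeUntil _ hvp).reachable.symm.trans hyw) ▸ hvp)
  have hadj := C.adj_of_mem_edges hC
  rcases a with v | e
  · exact avoid v (p.fst_mem_support_of_mem_edges hs) (C.fst_mem_support_of_mem_edges hC)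
  · rcases b with v | f
    · exact avoid v (p.snd_mem_support_of_mem_edges hs) (C.snd_mem_support_of_mem_edges hC)
    · simp at hadj

/-- The two edges of `C` at `w` cannot absorb all `G_F`-edges at `w`, of which there are at least
two as soon as there is one. -/
theorem exists_adj_notMem_edges (hF : H.IsEulerFamily F) (hC : C.IsCycle) {w : H.V}
    {g f : H.V ⊕ H.E} (hg : s(inl w, g) ∈ C.edges) (hgF : ¬ (H.eulerSubgraph F).Adj (inl w) g)
    (hf : (H.eulerSubgraph F).Adj (inl w) f) :
    ∃ m, (H.eulerSubgraph F).Adj (inl w) m ∧ s(inl w, m) ∉ C.edges := by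
  by_contra! hall
  rcases f with v | f
  · simp at hf
  obtain ⟨f', hne, hf'⟩ := hF.exists_ne_adj hf
  rcases hC.eq_or_eq_or_eq_of_mem_edges hg (hall _ hf) (hall _ hf') with rfl | rfl | h
  exacts [hgF hf, hgF hf', hne (inr_injective h).symm]

theorem reachable_of_mem_edges (hF : H.IsEulerFamily F) (hC : C.IsCycle)
    (hdist : VVerticesInDistinctComponents F C) (hcut : NoVVertexIsCut F C) {w : H.V}
    {g y : H.V ⊕ H.E} (hg : s(inl w, g) ∈ C.edges) (hy : y ≠ inl w)
    (hyw : (H.eulerSubgraph F).Reachable y (inl w)) : (switchedSubgraph F C).Reachable y g := by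
  have hw := C.fst_mem_support_of_mem_edges hg
  by_cases hgF : (H.eulerSubgraph F).Adj (inl w) g
  · exact reachable_of_reachable_inl hdist hcut hw hy hgF.ne' hyw hgF.symm.reachable
  obtain ⟨f, hf⟩ : ∃ f, (H.eulerSubgraph F).Adj (inl w) f := by
    obtain ⟨p⟩ := hyw.symm
    exact ⟨_, p.adj_snd (Walk.not_nil_of_ne hy.symm)⟩
  obtain ⟨m, hm, hmC⟩ := exists_adj_notMem_edges hF hC hg hgF hf
  have hym := reachable_of_reachable_inl hdist hcut hw hy hm.ne' hyw hm.symm.reachable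
  have hwg : (switchedSubgraph F C).Adj (inl w) g :=
    symmDiffEdges_adj_of_mem hg hgF (C.adj_of_mem_edges hg).ne
  exact hym.trans ((symmDiffEdges_adj_of_adj hm hmC).symm.reachable.trans hwg.reachable)

theorem reachable_of_mem_edges_of_mem_edges (hF : H.IsEulerFamily F) (hC : C.IsCycle)
    (hdist : VVerticesInDistinctComponents F C) (hcut : NoVVertexIsCut F C) {w : H.V}
    {g g' : H.V ⊕ H.E} (hg : s(inl w, g) ∈ C.edges) (hg' : s(inl w, g') ∈ C.edges) :
    (switchedSubgraph F C).Reachable g g' := by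
  by_cases hgF : (H.eulerSubgraph F).Adj (inl w) g
  · exact reachable_of_mem_edges hF hC hdist hcut hg' hgF.ne' hgF.symm.reachable
  by_cases hg'F : (H.eulerSubgraph F).Adj (inl w) g'
  · exact (reachable_of_mem_edges hF hC hdist hcut hg hg'F.ne' hg'F.symm.reachable).symm
  exact (symmDiffEdges_adj_of_mem hg hgF (C.adj_of_mem_edges hg).ne).symm.reachable.trans
    (symmDiffEdges_adj_of_mem hg' hg'F (C.adj_of_mem_edges hg').ne).reachable

/-- Consecutive e-vertices of `C` are joined in `G_F Δ C`, hence all of them are. -/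
theorem reachable_inr_of_mem_support (hF : H.IsEulerFamily F) (hC : C.IsCycle)
    (hdist : VVerticesInDistinctComponents F C) (hcut : NoVVertexIsCut F C) {e e' : H.E}
    (he : inr e ∈ C.support) (he' : inr e' ∈ C.support) :
    (switchedSubgraph F C).Reachable (inr e) (inr e') := by
  let P : H.V ⊕ H.E → Prop := Sum.elim
    (fun v => ∀ f, s(inl v, inr f) ∈ C.edges →
      (switchedSubgraph F C).Reachable (inr f) (inr e'))
    (fun f => (switchedSubgraph F C).Reachable (inr f) (inr e'))
  have hvf : ∀ v f, s(inl v, inr f) ∈ C.edges → (P (inl v) ↔ P (inr f)) := fun v f h =>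
    ⟨fun hv => hv f h, fun hf f' h' =>
      (reachable_of_mem_edges_of_mem_edges hF hC hdist hcut h' h).trans hf⟩
  have hP : ∀ a b, s(a, b) ∈ C.edges → (P a ↔ P b) := by
    intro a b hab
    have hadj := C.adj_of_mem_edges hab
    rcases a with v | f <;> rcases b with v' | f'
    · simp at hadj
    · exact hvf v f' hab
    · exact (hvf v' f (Sym2.eq_swap ▸ hab)).symm
    · simp at hadj
  exact ((C.iff_of_mem_support hP he).symm.trans (C.iff_of_mem_support hP he')).mpr
    (Reachable.refl (inr e'))

theorem reachable_of_adj_of_mem_cycleRegion (hF : H.IsEulerFamily F) (hC : C.IsCycle)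
    (hdist : VVerticesInDistinctComponents F C) (hcut : NoVVertexIsCut F C) {e : H.E}
    (he : inr e ∈ C.support) {z z' : H.V ⊕ H.E} (hzz' : (switchedSubgraph F C).Adj z z')
    (hz : z ∈ cycleRegion F C) : (switchedSubgraph F C).Reachable z (inr e) := by
  have toE := fun {f} (hf : inr f ∈ C.support) =>
    reachable_inr_of_mem_support hF hC hdist hcut hf he
  by_cases hzC : s(z, z') ∈ C.edges
  · have hadj := C.adj_of_mem_edges hzC
    rcases z with v | f
    · rcases z' with v' | f'
      · simp at hadj
      · exact hzz'.reachable.trans (toE (C.snd_mem_support_of_mem_edges hzC))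
    · exact toE (C.fst_mem_support_of_mem_edges hzC)
  obtain ⟨w, hw, hzw⟩ := hz
  obtain ⟨g, hg⟩ := exists_inr_mem_edges hC hw
  have hgE := toE (C.snd_mem_support_of_mem_edges hg)
  by_cases hzw' : z = inl w
  · subst hzw'
    have hz'w := (adj_of_symmDiffEdges_adj hzz' hzC).symm.reachable
    exact hzz'.reachable.trans
      ((reachable_of_mem_edges hF hC hdist hcut hg hzz'.ne.symm hz'w).trans hgE)
  · exact (reachable_of_mem_edges hF hC hdist hcut hg hzw' hzw).trans hgE

end EHypergraph

/-- Corollary 4.9(1): if the v-vertices of an `F`-interchanging cycle `C` lie in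
pairwise distinct connected components of `G_F`, at least two of which are
nontrivial, and none of these v-vertices is a cut vertex of `G_F`, then `C` is
an `F`-diminishing cycle. -/
theorem interchanging_vvertices_diminishing (H : EHypergraph) (F : Set H.Walk)
    (hF : H.IsEulerFamily F) {x : H.V ⊕ H.E} (C : (H.incidenceGraph).Walk x x)
    (hC : IsInterchanging H F C)
    (hdist : ∀ v w : H.V, (Sum.inl v : H.V ⊕ H.E) ∈ C.support →
      (Sum.inl w : H.V ⊕ H.E) ∈ C.support →
      (H.eulerSubgraph F).Reachable (Sum.inl v) (Sum.inl w) → v = w)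
    (htwo : ∃ v w : H.V, (Sum.inl v : H.V ⊕ H.E) ∈ C.support ∧
      (Sum.inl w : H.V ⊕ H.E) ∈ C.support ∧ v ≠ w ∧
      NontrivComp (H.eulerSubgraph F)
        ((H.eulerSubgraph F).connectedComponentMk (Sum.inl v)) ∧
      NontrivComp (H.eulerSubgraph F)
        ((H.eulerSubgraph F).connectedComponentMk (Sum.inl w)))
    (hcut : ∀ v : H.V, (Sum.inl v : H.V ⊕ H.E) ∈ C.support →
      ¬ IsCutVtx (H.eulerSubgraph F) (Sum.inl v)) :
    IsDiminishing H F C := by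
  obtain ⟨v, w, hv, hw, hvw, hvN, hwN⟩ := htwo
  obtain ⟨e, he⟩ := EHypergraph.exists_inr_mem_edges hC.1 hv
  have hregion : ∀ {z}, z ∈ C.support → z ∈ EHypergraph.cycleRegion F C :=
    EHypergraph.mem_cycleRegion_of_mem_support hC
  refine ⟨hC, ntComps_lt_of_merge (R := EHypergraph.cycleRegion F C) (b := inr e) ?_ ?_ ?_
    (hregion hv) (hregion hw) (fun h => hvw (hdist v w hv hw h)) hvN hwN⟩
  · rintro z z' hzz' ⟨u, hu, hzu⟩
    exact ⟨u, hu, hzz'.symm.reachable.trans hzu⟩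
  · exact fun z z' hz => EHypergraph.switchedSubgraph_adj_iff_of_notMem_cycleRegion hC hz
  · exact fun z z' hzz' hz => EHypergraph.reachable_of_adj_of_mem_cycleRegion hF hC.1 hdist hcut
      (C.snd_mem_support_of_mem_edges he) hzz' hz
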